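/- arXiv:2512.21029 — 8 statements merged into one kernel-verified Lean document; each statement's English description precedes it below -/
import Mathlib

section
/- Let A be a real N×s matrix, B a real o×s matrix, and P a real s×N matrix such that A*P*A = A and (P*A)ᵀ = P*A. Then there exists a constant c ∈ ℝ such that for every real o×N matrix W: trace((W − B*P) * (A * Aᵀ) * (W − B*P)ᵀ) = trace((W*A − B) * (W*A − B)ᵀ) + c. In words: the squared seminorm ‖W − BP‖²_{AAᵀ} and the mean-squared-error objective ‖WA − B‖²_Frob differ by a constant independent of W. -/
open Matrix

/-- The squared seminorm `‖W − B*P‖²_{AAᵀ}` and the mean-squared-error objective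
`‖W*A − B‖²_Frob` differ by a constant independent of `W`, whenever `P` satisfies
the two Penrose equations `A*P*A = A` and `(P*A)ᵀ = P*A`. -/
theorem seminorm_eq_mse_add_const (N s o : ℕ)
    (A : Matrix (Fin N) (Fin s) ℝ) (B : Matrix (Fin o) (Fin s) ℝ)
    (P : Matrix (Fin s) (Fin N) ℝ)
    (h1 : A * P * A = A) (h2 : (P * A)ᵀ = P * A) :
    ∃ c : ℝ, ∀ W : Matrix (Fin o) (Fin N) ℝ,
      ((W - B * P) * (A * Aᵀ) * (W - B * P)ᵀ).trace =
        ((W * A - B) * (W * A - B)ᵀ).trace + c := by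
  have hA : Aᵀ * Pᵀ = P * A := by rw [← transpose_mul]; exact h2
  have k1 : A * Aᵀ * Pᵀ = A := by rw [Matrix.mul_assoc, hA, ← Matrix.mul_assoc, h1]
  have k2 : P * (A * Aᵀ) = Aᵀ := by
    rw [← Matrix.mul_assoc, ← hA, Matrix.mul_assoc, ← transpose_mul, ← transpose_mul, h1]
  refine ⟨(B * (P * A) * Bᵀ).trace - (B * Bᵀ).trace, fun W => ?_⟩
  have key : (W - B * P) * (A * Aᵀ) * (W - B * P)ᵀ =
      (W * A - B) * (W * A - B)ᵀ + (B * (P * A) * Bᵀ - B * Bᵀ) := by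
    have e1 : W * (A * Aᵀ) * (Pᵀ * Bᵀ) = W * A * Bᵀ := by
      rw [← Matrix.mul_assoc, Matrix.mul_assoc W, k1]
    have e2 : B * P * (A * Aᵀ) * Wᵀ = B * Aᵀ * Wᵀ := by
      rw [Matrix.mul_assoc B P, k2]
    have e3 : B * P * (A * Aᵀ) * (Pᵀ * Bᵀ) = B * (P * A) * Bᵀ := by
      rw [Matrix.mul_assoc B P, k2, ← Matrix.mul_assoc, Matrix.mul_assoc B, hA]
    have e4 : W * A * (Aᵀ * Wᵀ) = W * (A * Aᵀ) * Wᵀ := by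
      rw [← Matrix.mul_assoc, Matrix.mul_assoc W A]
    simp only [Matrix.sub_mul, Matrix.mul_sub, transpose_sub, transpose_mul]
    rw [e1, e2, e3, e4]
    simp only [Matrix.mul_assoc]
    abel
  rw [key, trace_add, trace_sub]
end

section
/- Let A be a real N×s matrix, B a real o×s matrix, and P a real s×N matrix such that A*P*A = A and (P*A)ᵀ = P*A. Then for every set X of real o×N matrices and every W₀ ∈ X: W₀ minimizes the function W ↦ trace((W*A − B)*(W*A − B)ᵀ) over X if and only if W₀ minimizes the function W ↦ trace((W − B*P)*(A*Aᵀ)*(W − B*P)ᵀ) over X. In particular, the two sets of minimizers over X coincide. -/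
open Matrix

/-- Minimizers of the mean-squared-error loss `‖W*A − B‖²_Frob` over a set `X`
coincide with minimizers of the seminorm distance `‖W − B*P‖²_{AAᵀ}` over `X`,
whenever `P` satisfies the two Penrose equations `A*P*A = A` and `(P*A)ᵀ = P*A`. -/
theorem argmin_mse_iff_argmin_seminorm (N s o : ℕ)
    (A : Matrix (Fin N) (Fin s) ℝ) (B : Matrix (Fin o) (Fin s) ℝ)
    (P : Matrix (Fin s) (Fin N) ℝ)
    (h1 : A * P * A = A) (h2 : (P * A)ᵀ = P * A)
    (X : Set (Matrix (Fin o) (Fin N) ℝ)) (W₀ : Matrix (Fin o) (Fin N) ℝ) (hW₀ : W₀ ∈ X) :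
    (∀ W ∈ X, ((W₀ * A - B) * (W₀ * A - B)ᵀ).trace ≤ ((W * A - B) * (W * A - B)ᵀ).trace) ↔
    (∀ W ∈ X, ((W₀ - B * P) * (A * Aᵀ) * (W₀ - B * P)ᵀ).trace ≤
        ((W - B * P) * (A * Aᵀ) * (W - B * P)ᵀ).trace) := by
  have key : A * Aᵀ * Pᵀ = A := by
    have h : Aᵀ * Pᵀ = P * A := by rw [← Matrix.transpose_mul, h2]
    rw [Matrix.mul_assoc, h, ← Matrix.mul_assoc, h1]
  have key2 : A * (B * P * A - B)ᵀ = 0 := by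
    rw [Matrix.transpose_sub, Matrix.mul_sub, Matrix.transpose_mul, Matrix.transpose_mul,
      ← Matrix.mul_assoc, ← Matrix.mul_assoc, key, sub_self]
  have main : ∀ W : Matrix (Fin o) (Fin N) ℝ,
      ((W * A - B) * (W * A - B)ᵀ).trace =
        ((W - B * P) * (A * Aᵀ) * (W - B * P)ᵀ).trace +
        ((B * P * A - B) * (B * P * A - B)ᵀ).trace := by
    intro W
    set E := W - B * P with hE
    set D := B * P * A - B with hD
    have hdecomp : W * A - B = E * A + D := by
      rw [hE, hD]; rw [Matrix.sub_mul]; abel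
    have cross1 : E * A * Dᵀ = 0 := by
      rw [Matrix.mul_assoc, key2, Matrix.mul_zero]
    have cross2 : D * (E * A)ᵀ = 0 := by
      have := congrArg Matrix.transpose cross1
      rwa [Matrix.transpose_mul, Matrix.transpose_zero] at this
    rw [hdecomp, Matrix.transpose_add, Matrix.add_mul, Matrix.mul_add, Matrix.mul_add,
      cross2, Matrix.transpose_mul, ← Matrix.mul_assoc, cross1]
    simp [Matrix.mul_assoc, Matrix.trace_add]
  constructor <;> intro h W hW <;> have h1' := h W hW <;>
    have e1 := main W <;> have e2 := main W₀ <;> linarith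
end

section
/- Let A be a real N×s matrix and P a real s×N matrix satisfying the four Penrose equations A*P*A = A, P*A*P = P, (A*P)ᵀ = A*P, (P*A)ᵀ = P*A, and fix a natural number o. Then the set { B*P | B a real o×s matrix } equals the set of real o×N matrices M such that every row of M, viewed as a vector in ℝ^N, lies in the column space of A. In particular, if the column space of A is all of ℝ^N, then { B*P | B a real o×s matrix } is the set of all real o×N matrices. -/
open Matrix

/-- The column space of a real matrix `M`, i.e. the range of `x ↦ M.mulVec x`. -/
def colSpace {a b : Type*} [Fintype b] (M : Matrix a b ℝ) : Submodule ℝ (a → ℝ) :=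
  LinearMap.range M.mulVecLin

/-- If `P` is the Moore–Penrose pseudoinverse of `A` (the four Penrose equations),
then `{ B*P | B }` is exactly the set of `o×N` matrices all of whose rows lie in the
column space of `A`; in particular it is everything when that column space is all of `ℝ^N`. -/
theorem range_mul_pseudoinverse (N s o : ℕ)
    (A : Matrix (Fin N) (Fin s) ℝ) (P : Matrix (Fin s) (Fin N) ℝ)
    (h1 : A * P * A = A) (h2 : P * A * P = P)
    (h3 : (A * P)ᵀ = A * P) (h4 : (P * A)ᵀ = P * A) :
    ({ M : Matrix (Fin o) (Fin N) ℝ | ∃ B : Matrix (Fin o) (Fin s) ℝ, M = B * P } =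
      { M : Matrix (Fin o) (Fin N) ℝ | ∀ i : Fin o, (fun j => M i j) ∈ colSpace A }) ∧
    (colSpace A = ⊤ →
      { M : Matrix (Fin o) (Fin N) ℝ | ∃ B : Matrix (Fin o) (Fin s) ℝ, M = B * P } =
        Set.univ) := by
  have key : { M : Matrix (Fin o) (Fin N) ℝ | ∃ B : Matrix (Fin o) (Fin s) ℝ, M = B * P } =
      { M : Matrix (Fin o) (Fin N) ℝ | ∀ i : Fin o, (fun j => M i j) ∈ colSpace A } := by
    ext M
    simp only [Set.mem_setOf_eq]
    constructor
    · rintro ⟨B, rfl⟩ i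
      refine ⟨P *ᵥ (B i ᵥ* P), ?_⟩
      have hrow : (fun j => (B * P) i j) = B i ᵥ* P := by
        funext j
        simp [Matrix.mul_apply, Matrix.vecMul, dotProduct]
      rw [hrow]
      calc A.mulVecLin (P *ᵥ (B i ᵥ* P)) = (A * P) *ᵥ (B i ᵥ* P) := by
            simp [Matrix.mulVec_mulVec]
        _ = (A * P)ᵀ *ᵥ (B i ᵥ* P) := by rw [h3]
        _ = B i ᵥ* P ᵥ* (A * P) := by rw [Matrix.mulVec_transpose]
        _ = B i ᵥ* (P * (A * P)) := by rw [Matrix.vecMul_vecMul]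
        _ = B i ᵥ* P := by rw [← Matrix.mul_assoc, h2]
    · intro h
      refine ⟨M * A, ?_⟩
      ext i j
      obtain ⟨x, hx⟩ := h i
      have hMi : M i = A *ᵥ x := by
        funext j; exact congrFun hx.symm j
      have : (M * A * P) i = M i := by
        have hrow : (M * A * P) i = M i ᵥ* (A * P) := by
          funext j
          simp [Matrix.mul_assoc, Matrix.mul_apply, Matrix.vecMul, dotProduct,
            Finset.mul_sum, Finset.sum_mul, mul_assoc]
          rw [Finset.sum_comm]
        rw [hrow, hMi, ← Matrix.mulVec_transpose, h3, Matrix.mulVec_mulVec,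
          Matrix.mul_assoc, ← Matrix.mul_assoc, h1]
      rw [Matrix.mul_assoc] at this ⊢
      exact (congrFun this j).symm
  refine ⟨key, fun htop => ?_⟩
  rw [key]
  ext M
  simp only [Set.mem_setOf_eq, Set.mem_univ, iff_true, htop, Submodule.mem_top,
    forall_const]
  intro _; trivial
end

section
/- Let o, N, s, ρ be natural numbers, U a real orthogonal N×N matrix (U*Uᵀ = 1), V a real orthogonal s×s matrix (V*Vᵀ = 1), D a real invertible diagonal N×N matrix, and P the real N×s matrix with P i j = 1 if i = j (as natural numbers) and i < ρ, and P i j = 0 otherwise. Set A := U*D*P*Vᵀ, and for a real o×s matrix B set R := B*V*Pᵀ. Then there exists c ∈ ℝ such that for every real o×N matrix W: trace((W*A − B)*(W*A − B)ᵀ) = trace((W*U*D − R)*(P*Pᵀ)*(W*U*D − R)ᵀ) + c. Consequently, for every natural number r, a matrix W with rank W ≤ r minimizes trace((W*A − B)*(W*A − B)ᵀ) over { W | rank W ≤ r } if and only if Ŵ := W*U*D minimizes trace((Ŵ − R)*(P*Pᵀ)*(Ŵ − R)ᵀ) over { Ŵ | rank Ŵ ≤ r }. -/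
open Matrix

/-- Lemma 4.1 of the paper: rewriting the mean-squared-error loss via a singular value
decomposition `A = U*(D*P)*Vᵀ`. The loss `‖W*A − B‖²_Frob` equals the seminorm distance
`‖W*U*D − R‖²_{PPᵀ}` up to an additive constant, where `R = B*V*Pᵀ`; consequently `W`
minimizes the former over matrices of rank at most `r` iff `Ŵ = W*U*D` minimizes the
latter over matrices of rank at most `r`. -/
theorem mse_reduction_svd (o N s ρ : ℕ)
    (U : Matrix (Fin N) (Fin N) ℝ) (hU : U * Uᵀ = 1)
    (V : Matrix (Fin s) (Fin s) ℝ) (hV : V * Vᵀ = 1)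
    (D : Matrix (Fin N) (Fin N) ℝ) (hDdiag : D.IsDiag) (hDinv : IsUnit D)
    (P : Matrix (Fin N) (Fin s) ℝ)
    (hP : ∀ i j, P i j = if (i : ℕ) = (j : ℕ) ∧ (i : ℕ) < ρ then 1 else 0)
    (A : Matrix (Fin N) (Fin s) ℝ) (hA : A = U * D * P * Vᵀ)
    (B : Matrix (Fin o) (Fin s) ℝ)
    (R : Matrix (Fin o) (Fin N) ℝ) (hR : R = B * V * Pᵀ) :
    (∃ c : ℝ, ∀ W : Matrix (Fin o) (Fin N) ℝ,
        ((W * A - B) * (W * A - B)ᵀ).trace =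
          ((W * U * D - R) * (P * Pᵀ) * (W * U * D - R)ᵀ).trace + c) ∧
    (∀ (r : ℕ) (W : Matrix (Fin o) (Fin N) ℝ), W.rank ≤ r →
      ((∀ W₂ : Matrix (Fin o) (Fin N) ℝ, W₂.rank ≤ r →
          ((W * A - B) * (W * A - B)ᵀ).trace ≤ ((W₂ * A - B) * (W₂ * A - B)ᵀ).trace) ↔
       (∀ What : Matrix (Fin o) (Fin N) ℝ, What.rank ≤ r →
          ((W * U * D - R) * (P * Pᵀ) * (W * U * D - R)ᵀ).trace ≤
            ((What - R) * (P * Pᵀ) * (What - R)ᵀ).trace))) := by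
  have hVtV : Vᵀ * V = 1 := mul_eq_one_comm.mp hV
  have hUtU : Uᵀ * U = 1 := mul_eq_one_comm.mp hU
  have hDdet : IsUnit D.det := (Matrix.isUnit_iff_isUnit_det D).mp hDinv
  -- P * Pᵀ * P = P
  have hPPP : P * Pᵀ * P = P := by
    ext i j
    simp only [Matrix.mul_apply, Matrix.transpose_apply, hP]
    by_cases hij : (i : ℕ) = (j : ℕ) ∧ (i : ℕ) < ρ
    · rw [if_pos hij]
      rw [Finset.sum_eq_single i]
      · rw [Finset.sum_eq_single j]
        · rw [if_pos hij]
          norm_num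
        · intro y _ hy
          rw [if_neg, zero_mul]
          rintro ⟨h1, _⟩
          exact hy (Fin.ext (hij.1 ▸ h1).symm ▸ rfl)
        · intro h; exact absurd (Finset.mem_univ j) h
      · intro x _ hx
        rw [if_neg, mul_zero]
        rintro ⟨h1, _⟩
        exact hx (Fin.ext (h1.trans hij.1.symm))
      · intro h; exact absurd (Finset.mem_univ i) h
    · rw [if_neg hij]
      apply Finset.sum_eq_zero
      intro x _
      by_cases hx : (x : ℕ) = (j : ℕ) ∧ (x : ℕ) < ρ
      · rw [Finset.sum_eq_zero, zero_mul]
        intro y _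
        by_cases hy : (i : ℕ) = (y : ℕ) ∧ (i : ℕ) < ρ
        · rw [if_pos hy, if_neg, mul_zero]
          rintro ⟨h1, _⟩
          exact hij ⟨(hy.1.trans h1.symm).trans hx.1, hy.2⟩
        · rw [if_neg hy, zero_mul]
      · rw [if_neg hx, mul_zero]
  have hPP2 : Pᵀ * (P * Pᵀ) = Pᵀ := by
    have := congrArg Matrix.transpose hPPP
    simpa [Matrix.transpose_mul, Matrix.mul_assoc] using this
  set C : Matrix (Fin o) (Fin s) ℝ := B * V - B * V * (Pᵀ * P) with hC
  have hCPt : C * Pᵀ = 0 := by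
    rw [hC, Matrix.sub_mul]
    simp only [Matrix.mul_assoc]
    rw [hPP2, sub_self]
  have hPCt : P * Cᵀ = 0 := by
    have := congrArg Matrix.transpose hCPt
    simpa using this
  -- main trace identity
  have key : ∀ W : Matrix (Fin o) (Fin N) ℝ,
      ((W * A - B) * (W * A - B)ᵀ).trace =
        ((W * U * D - R) * (P * Pᵀ) * (W * U * D - R)ᵀ).trace + (C * Cᵀ).trace := by
    intro W
    set X : Matrix (Fin o) (Fin N) ℝ := W * U * D - R with hX
    have h1 : W * A - B = (X * P - C) * Vᵀ := by
      rw [hX, hC, hA, hR]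
      have hB : B * (V * Vᵀ) = B := by rw [hV, Matrix.mul_one]
      simp only [Matrix.sub_mul, Matrix.mul_sub, Matrix.mul_assoc] at *
      rw [hB]
      abel
    have h2 : (W * A - B) * (W * A - B)ᵀ = (X * P - C) * (X * P - C)ᵀ := by
      rw [h1, Matrix.transpose_mul, Matrix.transpose_transpose, Matrix.mul_assoc,
        ← Matrix.mul_assoc Vᵀ V _, hVtV, Matrix.one_mul]
    rw [h2]
    have h3 : (X * P - C) * (X * P - C)ᵀ
        = X * (P * Pᵀ) * Xᵀ - X * (P * Cᵀ) - (C * Pᵀ) * Xᵀ + C * Cᵀ := by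
      rw [Matrix.transpose_sub, Matrix.transpose_mul, Matrix.sub_mul, Matrix.mul_sub,
        Matrix.mul_sub]
      simp only [Matrix.mul_assoc]
      abel
    rw [h3, hPCt, hCPt, Matrix.mul_zero, Matrix.zero_mul, sub_zero, sub_zero,
      Matrix.trace_add]
  refine ⟨⟨(C * Cᵀ).trace, key⟩, ?_⟩
  intro r W hW
  constructor
  · intro h What hWhat
    set W₂ : Matrix (Fin o) (Fin N) ℝ := What * D⁻¹ * Uᵀ with hW₂
    have hrk : W₂.rank ≤ r :=
      le_trans (le_trans (Matrix.rank_mul_le_left _ _)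
        (Matrix.rank_mul_le_left _ _)) hWhat
    have hW2e : W₂ * U * D = What := by
      rw [hW₂]
      rw [show What * D⁻¹ * Uᵀ * U * D = What * D⁻¹ * (Uᵀ * U) * D by
        simp only [Matrix.mul_assoc], hUtU, Matrix.mul_one,
        show What * D⁻¹ * D = What * (D⁻¹ * D) by simp only [Matrix.mul_assoc],
        Matrix.nonsing_inv_mul D hDdet, Matrix.mul_one]
    have := h W₂ hrk
    rw [key W, key W₂, hW2e] at this
    linarith
  · intro h W₂ hW₂
    have hrk : (W₂ * U * D).rank ≤ r :=
      le_trans (le_trans (Matrix.rank_mul_le_left _ _)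
        (Matrix.rank_mul_le_left _ _)) hW₂
    have := h (W₂ * U * D) hrk
    rw [key W, key W₂]
    linarith
end

section
/- Let o, t be natural numbers, T₁ a real orthogonal o×o matrix, T₂ a real orthogonal t×t matrix, Σ a real o×t matrix with Σ i j = 0 whenever i ≠ j (as natural numbers), and S a set of natural numbers. Define Σ' by Σ' i j = Σ i j if i ∈ S, and Σ' i j = 0 otherwise. Set R' := T₁*Σ*T₂ and W' := T₁*Σ'*T₂. Then, as subspaces of ℝ^o: the orthogonal complement (with respect to the dot product) of the column space of W' − R' equals the sum of the orthogonal complement of the column space of R' and the column space of W'; moreover, the orthogonal complement of the column space of R' intersects the column space of W' trivially, so the sum is direct. -/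
open Matrix
open scoped Classical

def dotOrth {a : Type*} [Fintype a] (S : Submodule ℝ (a → ℝ)) : Submodule ℝ (a → ℝ) where
  carrier := { v | ∀ x ∈ S, x ⬝ᵥ v = 0 }
  add_mem' := by
    intro v w hv hw x hx
    simp only [Set.mem_setOf_eq] at *
    rw [dotProduct_add, hv x hx, hw x hx, add_zero]
  zero_mem' := by
    intro x hx
    simp
  smul_mem' := by
    intro c v hv x hx
    simp only [Set.mem_setOf_eq] at *
    rw [dotProduct_smul, hv x hx, smul_zero]

namespace SVDAux

variable {o t : ℕ}

lemma mem_dotOrth {a : Type*} [Fintype a] {S : Submodule ℝ (a → ℝ)} {v : a → ℝ} :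
    v ∈ dotOrth S ↔ ∀ x ∈ S, x ⬝ᵥ v = 0 := Iff.rfl

/-- coordinate subspace supported on `A` -/
def coord (A : Set (Fin o)) : Submodule ℝ (Fin o → ℝ) where
  carrier := {v | ∀ i ∉ A, v i = 0}
  add_mem' := by intro v w hv hw i hi; simp [Pi.add_apply, hv i hi, hw i hi]
  zero_mem' := by intro i hi; rfl
  smul_mem' := by intro c v hv i hi; simp [hv i hi]

lemma mem_coord {A : Set (Fin o)} {v : Fin o → ℝ} : v ∈ coord A ↔ ∀ i ∉ A, v i = 0 := Iff.rfl

lemma coord_sup (A B : Set (Fin o)) : coord A ⊔ coord B = coord (A ∪ B) := by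
  apply le_antisymm
  · apply sup_le
    · intro v hv i hi
      exact hv i (fun h => hi (Or.inl h))
    · intro v hv i hi
      exact hv i (fun h => hi (Or.inr h))
  · intro v hv
    have h1 : (fun i => if i ∈ A then v i else 0) ∈ coord A := by
      intro i hi; simp [hi]
    have h2 : (fun i => if i ∈ A then 0 else v i) ∈ coord B := by
      intro i hi
      by_cases hA : i ∈ A
      · simp [hA]
      · simp only [hA, if_false]
        exact hv i (by simp [hA, hi])
    have : v = (fun i => if i ∈ A then v i else 0) + (fun i => if i ∈ A then 0 else v i) := by
      funext i; by_cases hA : i ∈ A <;> simp [hA]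
    rw [this]
    exact Submodule.add_mem_sup h1 h2

lemma dotOrth_coord (A : Set (Fin o)) : dotOrth (coord A) = coord Aᶜ := by
  ext v
  constructor
  · intro hv i hi
    simp only [Set.mem_compl_iff, not_not] at hi
    have hx : (Pi.single i (1:ℝ)) ∈ coord A := by
      intro k hk
      exact Pi.single_eq_of_ne (fun h : k = i => hk (by rw [h]; exact hi)) 1
    have := hv _ hx
    rwa [single_dotProduct, one_mul] at this
  · intro hv x hx
    rw [dotProduct]
    apply Finset.sum_eq_zero
    intro i _
    by_cases hA : i ∈ A
    · rw [hv i (by simpa using hA), mul_zero]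
    · rw [hx i hA, zero_mul]

lemma coord_inf_of_disjoint {A B : Set (Fin o)} (h : A ∩ B = ∅) :
    coord A ⊓ coord B = ⊥ := by
  rw [eq_bot_iff]
  rintro v ⟨hA, hB⟩
  have : v = 0 := by
    funext i
    by_cases hiA : i ∈ A
    · exact hB i (fun hiB => (Set.eq_empty_iff_forall_notMem.mp h i) ⟨hiA, hiB⟩)
    · exact hA i hiA
  simp [this]

lemma colSpace_mul_right (M : Matrix (Fin o) (Fin t) ℝ) (T : Matrix (Fin t) (Fin t) ℝ)
    (hT : T * Tᵀ = 1) : colSpace (M * T) = colSpace M := by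
  unfold colSpace
  rw [Matrix.mulVecLin_mul]
  apply LinearMap.range_comp_of_range_eq_top
  rw [LinearMap.range_eq_top]
  intro y
  exact ⟨Tᵀ.mulVec y, by rw [mulVecLin_apply, mulVec_mulVec, hT, one_mulVec]⟩

lemma colSpace_mul_left (T : Matrix (Fin o) (Fin o) ℝ) (M : Matrix (Fin o) (Fin t) ℝ) :
    colSpace (T * M) = (colSpace M).map T.mulVecLin := by
  unfold colSpace
  rw [Matrix.mulVecLin_mul, LinearMap.range_comp]

lemma colSpace_diag (Sg : Matrix (Fin o) (Fin t) ℝ)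
    (h : ∀ (i : Fin o) (j : Fin t), (i : ℕ) ≠ (j : ℕ) → Sg i j = 0) :
    colSpace Sg = coord {i | ∃ j, Sg i j ≠ 0} := by
  ext v
  constructor
  · rintro ⟨x, rfl⟩ i hi
    simp only [Set.mem_setOf_eq, not_exists, not_not] at hi
    simp only [mulVecLin_apply, mulVec, dotProduct]
    exact Finset.sum_eq_zero fun j _ => by rw [hi j, zero_mul]
  · intro hv
    refine ⟨fun j => if hj : (j : ℕ) < o then
        (if Sg ⟨(j : ℕ), hj⟩ j ≠ 0 then v ⟨(j : ℕ), hj⟩ / Sg ⟨(j : ℕ), hj⟩ j else 0) else 0, ?_⟩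
    funext i
    simp only [mulVecLin_apply, mulVec, dotProduct]
    by_cases hi : ∃ j, Sg i j ≠ 0
    · obtain ⟨j₀, hj₀⟩ := hi
      have hij : (i : ℕ) = (j₀ : ℕ) := by
        by_contra hne; exact hj₀ (h i j₀ hne)
      rw [Finset.sum_eq_single j₀]
      · have hl : (j₀ : ℕ) < o := hij ▸ i.isLt
        have hfin : (⟨(j₀ : ℕ), hl⟩ : Fin o) = i := by
          apply Fin.ext; exact hij.symm
        rw [dif_pos hl]
        simp only [hfin]
        rw [if_pos hj₀, mul_comm, div_mul_cancel₀ _ hj₀]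
      · intro j _ hj
        have : (i : ℕ) ≠ (j : ℕ) := by
          rw [hij]; intro hc; exact hj (Fin.ext hc.symm)
        rw [h i j this, zero_mul]
      · intro hmem; exact absurd (Finset.mem_univ j₀) hmem
    · have hv0 : v i = 0 := hv i hi
      push_neg at hi
      rw [hv0]
      exact Finset.sum_eq_zero fun j _ => by rw [hi j, zero_mul]

lemma dotOrth_map (T : Matrix (Fin o) (Fin o) ℝ) (hT : T * Tᵀ = 1)
    (U : Submodule ℝ (Fin o → ℝ)) :
    dotOrth (U.map T.mulVecLin) = (dotOrth U).map T.mulVecLin := by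
  have hT' : Tᵀ * T = 1 := mul_eq_one_comm.mp hT
  ext v
  constructor
  · intro hv
    refine ⟨Tᵀ.mulVec v, ?_, ?_⟩
    · intro u hu
      have := hv (T.mulVec u) ⟨u, hu, rfl⟩
      rwa [dotProduct_comm, dotProduct_mulVec, ← mulVec_transpose, dotProduct_comm] at this
    · simp only [mulVecLin_apply, mulVec_mulVec, hT, one_mulVec]
  · rintro ⟨w, hw, rfl⟩ x ⟨u, hu, rfl⟩
    simp only [mulVecLin_apply]
    rw [dotProduct_mulVec, ← mulVec_transpose, mulVec_mulVec, hT', one_mulVec]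
    exact hw u hu

end SVDAux

open SVDAux in
/-- Equation (eq:finalconc) of the paper: for a diagonal truncation `W'` of the singular
value decomposition `R' = T₁ Σ T₂`, one has
`cspan(W'−R')^⊥ = cspan(R')^⊥ ⊕ cspan(W')`, the sum being direct. -/
theorem colSpace_orth_of_svd_truncation (o t : ℕ)
    (T₁ : Matrix (Fin o) (Fin o) ℝ) (hT₁ : T₁ * T₁ᵀ = 1)
    (T₂ : Matrix (Fin t) (Fin t) ℝ) (hT₂ : T₂ * T₂ᵀ = 1)
    (Sg : Matrix (Fin o) (Fin t) ℝ) (hSg : ∀ (i : Fin o) (j : Fin t), (i : ℕ) ≠ (j : ℕ) → Sg i j = 0)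
    (S : Set ℕ)
    (Sg' : Matrix (Fin o) (Fin t) ℝ)
    (hSg' : ∀ (i : Fin o) (j : Fin t), Sg' i j = if (i : ℕ) ∈ S then Sg i j else 0)
    (R' W' : Matrix (Fin o) (Fin t) ℝ)
    (hR' : R' = T₁ * Sg * T₂) (hW' : W' = T₁ * Sg' * T₂) :
    dotOrth (colSpace (W' - R')) = dotOrth (colSpace R') ⊔ colSpace W' ∧
    dotOrth (colSpace R') ⊓ colSpace W' = ⊥ := by
  have hT₁' : T₁ᵀ * T₁ = 1 := mul_eq_one_comm.mp hT₁
  have hinj : Function.Injective T₁.mulVecLin := by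
    apply Function.LeftInverse.injective (g := T₁ᵀ.mulVecLin)
    intro x
    simp only [mulVecLin_apply, mulVec_mulVec, hT₁', one_mulVec]
  set A : Set (Fin o) := {i | ∃ j, Sg i j ≠ 0} with hA
  set P : Set (Fin o) := {i | (i : ℕ) ∈ S} with hP
  -- column spaces
  have hcR : colSpace R' = (coord Aᶜᶜ).map T₁.mulVecLin := by
    rw [hR', colSpace_mul_right _ _ hT₂, colSpace_mul_left, colSpace_diag Sg hSg, compl_compl]
  have hSg'diag : ∀ (i : Fin o) (j : Fin t), (i : ℕ) ≠ (j : ℕ) → Sg' i j = 0 := by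
    intro i j hij; rw [hSg' i j, hSg i j hij, ite_self]
  have hcW : colSpace W' = (coord (A ∩ P)).map T₁.mulVecLin := by
    rw [hW', colSpace_mul_right _ _ hT₂, colSpace_mul_left, colSpace_diag Sg' hSg'diag]
    congr 1
    congr 1
    ext i
    simp only [Set.mem_setOf_eq, Set.mem_inter_iff, hA, hP]
    constructor
    · rintro ⟨j, hj⟩
      rw [hSg' i j] at hj
      by_cases hiS : (i : ℕ) ∈ S
      · exact ⟨⟨j, by rwa [if_pos hiS] at hj⟩, hiS⟩
      · exact absurd rfl (by rwa [if_neg hiS] at hj)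
    · rintro ⟨⟨j, hj⟩, hiS⟩
      exact ⟨j, by rw [hSg' i j, if_pos hiS]; exact hj⟩
  have hWRdiag : ∀ (i : Fin o) (j : Fin t), (i : ℕ) ≠ (j : ℕ) → (Sg' - Sg) i j = 0 := by
    intro i j hij
    simp [hSg'diag i j hij, hSg i j hij]
  have hcWR : colSpace (W' - R') = (coord (A \ P)).map T₁.mulVecLin := by
    have : W' - R' = T₁ * (Sg' - Sg) * T₂ := by
      rw [hR', hW', ← Matrix.sub_mul, ← Matrix.mul_sub]
    rw [this, colSpace_mul_right _ _ hT₂, colSpace_mul_left, colSpace_diag _ hWRdiag]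
    congr 1
    congr 1
    ext i
    simp only [Set.mem_setOf_eq, Set.mem_diff, hA, hP, Matrix.sub_apply]
    constructor
    · rintro ⟨j, hj⟩
      rw [hSg' i j] at hj
      by_cases hiS : (i : ℕ) ∈ S
      · rw [if_pos hiS, sub_self] at hj; exact absurd rfl hj
      · rw [if_neg hiS, zero_sub, neg_ne_zero] at hj
        exact ⟨⟨j, hj⟩, hiS⟩
    · rintro ⟨⟨j, hj⟩, hiS⟩
      refine ⟨j, ?_⟩
      rw [hSg' i j, if_neg hiS, zero_sub, neg_ne_zero]
      exact hj
  have hsets : (A \ P)ᶜ = Aᶜ ∪ (A ∩ P) := by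
    ext i
    by_cases hiA : i ∈ A <;> by_cases hiP : i ∈ P <;>
      simp [Set.mem_diff, hiA, hiP]
  constructor
  · rw [hcWR, hcR, hcW, dotOrth_map _ hT₁, dotOrth_map _ hT₁, dotOrth_coord, dotOrth_coord,
      compl_compl, ← Submodule.map_sup, coord_sup, hsets]
  · rw [hcR, hcW, dotOrth_map _ hT₁, dotOrth_coord, compl_compl,
      ← Submodule.map_inf _ hinj, coord_inf_of_disjoint, Submodule.map_bot]
    ext i
    simp only [Set.mem_inter_iff, Set.mem_compl_iff, Set.mem_empty_iff_false, iff_false]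
    rintro ⟨hiAc, hiA, _⟩
    exact hiAc hiA
end

section
/- Let o, t, m be natural numbers and R' a real o×t matrix. For a real o×t matrix Y, say Crit'(Y) holds if trace((Y − R')*N'ᵀ) = 0 for every real o×t matrix N' that can be written N' = N'₁ + N'₂ with the row space of N'₁ contained in the row space of Y and the column space of N'₂ contained in the column space of Y. Let W' be a real o×t matrix, W'' a real o×m matrix, W := fromColumns W' W'' the o×(t⊕m) block matrix, R := fromColumns R' 0, and Π := fromBlocks 1 0 0 0 the (t⊕m)×(t⊕m) matrix that is the identity on the first t coordinates and zero on the last m. Say Crit(W) holds if trace((W − R)*Π*Nᵀ) = 0 for every real o×(t⊕m) matrix N that can be written N = N₁ + N₂ with the row space of N₁ contained in the row space of W and the column space of N₂ contained in the column space of W. Then: Crit(W) holds if and only if Crit'(W') holds and every vector in the column space of W'' has dot product 0 with every vector in the column space of W' − R'. -/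
/-!
The seminorm pairing with `(W − R)Π` only sees the first block column: it is the Frobenius
pairing of `W' − R'` with `N.toCols₁`. Tangent vectors at `W` are `E W + W P`, whose first
block column `E W' + W' P₁ + W'' P₂` has `P₁`, `P₂` arbitrary. Hence criticality of `W` splits
into criticality of `W'` and `tr((W' − R')(W'' Q)ᵀ) = tr(W''ᵀ (W' − R') Qᵀ) = 0` for all `Q`,
i.e. `W''ᵀ (W' − R') = 0`, which is the orthogonality of the two column spaces.
-/

open Matrix

/-- The row space of a real matrix `M`, i.e. the column space of `Mᵀ`. -/
def rowSpace {a b : Type*} [Fintype a] (M : Matrix a b ℝ) : Submodule ℝ (b → ℝ) :=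
  colSpace Mᵀ

/-- Criticality of `Y` for the Frobenius distance to `R'` on the determinantal variety:
`Y − R'` is trace-orthogonal to the tangent space `ℝ^o ⊗ rowspace(Y) + colspace(Y) ⊗ ℝ^t`. -/
def Crit' {o t : ℕ} (R' Y : Matrix (Fin o) (Fin t) ℝ) : Prop :=
  ∀ N' : Matrix (Fin o) (Fin t) ℝ,
    (∃ N'₁ N'₂, N' = N'₁ + N'₂ ∧ rowSpace N'₁ ≤ rowSpace Y ∧ colSpace N'₂ ≤ colSpace Y) →
    ((Y - R') * N'ᵀ).trace = 0

/-- Criticality of `W` for the seminorm distance `‖· − R‖²_{ΠΠᵀ}` on the determinantal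
variety, where `R = (R' | 0)` and `Π = fromBlocks 1 0 0 0`. -/
def Crit {o t m : ℕ} (R' : Matrix (Fin o) (Fin t) ℝ)
    (W : Matrix (Fin o) (Fin t ⊕ Fin m) ℝ) : Prop :=
  ∀ N : Matrix (Fin o) (Fin t ⊕ Fin m) ℝ,
    (∃ N₁ N₂, N = N₁ + N₂ ∧ rowSpace N₁ ≤ rowSpace W ∧ colSpace N₂ ≤ colSpace W) →
    ((W - Matrix.fromCols R' (0 : Matrix (Fin o) (Fin m) ℝ)) *
        (Matrix.fromBlocks (1 : Matrix (Fin t) (Fin t) ℝ) 0 0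
          (0 : Matrix (Fin m) (Fin m) ℝ)) * Nᵀ).trace = 0

section Factorization

variable {a b c : Type*}

lemma colSpace_mul_le [Fintype b] [Fintype c] (P : Matrix a b ℝ) (Q : Matrix b c ℝ) :
    colSpace (P * Q) ≤ colSpace P := by
  rw [colSpace, colSpace, mulVecLin_mul]
  exact LinearMap.range_comp_le_range _ _

lemma colSpace_le_colSpace_iff [Fintype b] [Fintype c] [DecidableEq c]
    {M : Matrix a c ℝ} {P : Matrix a b ℝ} :
    colSpace M ≤ colSpace P ↔ ∃ Q : Matrix b c ℝ, P * Q = M := by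
  refine ⟨fun h => ?_, fun ⟨Q, hQ⟩ => hQ ▸ colSpace_mul_le P Q⟩
  have hcol : ∀ j, ∃ v, P *ᵥ v = M.col j := fun j => h ⟨Pi.single j 1, mulVec_single_one M j⟩
  choose q hq using hcol
  refine ⟨(of q)ᵀ, ?_⟩
  ext i j
  simpa [mul_apply, mulVec, dotProduct] using congrFun (hq j) i

lemma rowSpace_le_rowSpace_iff [Fintype a] [Fintype c] [DecidableEq a]
    {M : Matrix a b ℝ} {P : Matrix c b ℝ} :
    rowSpace M ≤ rowSpace P ↔ ∃ E : Matrix a c ℝ, E * P = M := by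
  rw [rowSpace, rowSpace, colSpace_le_colSpace_iff]
  refine ⟨fun ⟨Q, hQ⟩ => ⟨Qᵀ, ?_⟩, fun ⟨E, hE⟩ => ⟨Eᵀ, ?_⟩⟩
  · rw [← transpose_transpose M, ← hQ, transpose_mul, transpose_transpose]
  · rw [← hE, transpose_mul]

end Factorization

lemma forall_tangent_iff {a b : Type*} [Fintype a] [Fintype b] [DecidableEq a] [DecidableEq b]
    (Y : Matrix a b ℝ) (p : Matrix a b ℝ → Prop) :
    (∀ N, (∃ N₁ N₂, N = N₁ + N₂ ∧ rowSpace N₁ ≤ rowSpace Y ∧ colSpace N₂ ≤ colSpace Y) → p N) ↔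
      ∀ (E : Matrix a a ℝ) (P : Matrix b b ℝ), p (E * Y + Y * P) := by
  simp only [rowSpace_le_rowSpace_iff, colSpace_le_colSpace_iff]
  constructor
  · intro h E P
    exact h _ ⟨_, _, rfl, ⟨E, rfl⟩, ⟨P, rfl⟩⟩
  · rintro h N ⟨_, _, rfl, ⟨E, rfl⟩, ⟨P, rfl⟩⟩
    exact h E P

section Blocks

variable {o t m : Type*} [Fintype o] [Fintype t] [Fintype m]

lemma trace_fromCols_sub_mul_fromBlocks_mul_transpose [DecidableEq t]
    (W' R' : Matrix o t ℝ) (W'' : Matrix o m ℝ) (N : Matrix o (t ⊕ m) ℝ) :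
    ((fromCols W' W'' - fromCols R' (0 : Matrix o m ℝ)) *
        fromBlocks (1 : Matrix t t ℝ) 0 0 (0 : Matrix m m ℝ) * Nᵀ).trace =
      ((W' - R') * N.toCols₁ᵀ).trace := by
  have hsub : fromCols W' W'' - fromCols R' (0 : Matrix o m ℝ) = fromCols (W' - R') W'' := by
    ext i (j | j) <;> simp
  rw [← fromCols_toCols N, hsub, fromCols_mul_fromBlocks, transpose_fromCols,
    fromCols_mul_fromRows]
  simp

lemma toCols₁_mul_fromCols_add_fromCols_mul (W' : Matrix o t ℝ) (W'' : Matrix o m ℝ)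
    (E : Matrix o o ℝ) (P : Matrix (t ⊕ m) (t ⊕ m) ℝ) :
    (E * fromCols W' W'' + fromCols W' W'' * P).toCols₁ =
      E * W' + W' * P.toCols₁.toRows₁ + W'' * P.toCols₁.toRows₂ := by
  rw [← fromCols_toCols P, ← fromRows_toRows P.toCols₁]
  ext i j
  simp [mul_apply, add_assoc]

end Blocks

section Orthogonality

variable {a b c : Type*} [Fintype a] [Fintype b] [Fintype c]

lemma forall_trace_mul_transpose_eq_zero_iff [DecidableEq a] [DecidableEq b] (M : Matrix a b ℝ) :
    (∀ Q : Matrix a b ℝ, (M * Qᵀ).trace = 0) ↔ M = 0 := by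
  refine ⟨fun h => ?_, fun h Q => by simp [h]⟩
  ext i j
  simpa [transpose_single, trace_mul_single] using h (single i j 1)

lemma dotProduct_mulVec_mulVec (A : Matrix a b ℝ) (B : Matrix a c ℝ) (u : b → ℝ) (v : c → ℝ) :
    (B *ᵥ v) ⬝ᵥ (A *ᵥ u) = ((Bᵀ * A) *ᵥ u) ⬝ᵥ v := by
  rw [dotProduct_comm, dotProduct_mulVec, ← mulVec_transpose, mulVec_mulVec]

lemma colSpace_orthogonal_iff (A : Matrix a b ℝ) (B : Matrix a c ℝ) :
    (∀ x ∈ colSpace B, ∀ y ∈ colSpace A, x ⬝ᵥ y = 0) ↔ Bᵀ * A = 0 := by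
  simp only [colSpace, LinearMap.mem_range, mulVecLin_apply, forall_exists_index,
    forall_apply_eq_imp_iff, dotProduct_mulVec_mulVec]
  rw [forall_comm, ext_iff_mulVec]
  simp only [dotProduct_eq_zero_iff, zero_mulVec]

lemma forall_trace_mul_transpose_mul_eq_zero_iff [DecidableEq b] [DecidableEq c]
    (A : Matrix a b ℝ) (B : Matrix a c ℝ) :
    (∀ Q : Matrix c b ℝ, (A * (B * Q)ᵀ).trace = 0) ↔
      ∀ x ∈ colSpace B, ∀ y ∈ colSpace A, x ⬝ᵥ y = 0 := by
  have hcycle (Q : Matrix c b ℝ) : (A * (B * Q)ᵀ).trace = (Bᵀ * A * Qᵀ).trace := by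
    rw [transpose_mul, ← Matrix.mul_assoc, trace_mul_comm, Matrix.mul_assoc]
  simp only [hcycle, forall_trace_mul_transpose_eq_zero_iff, colSpace_orthogonal_iff]

end Orthogonality

lemma crit'_iff_forall {o t : ℕ} (R' Y : Matrix (Fin o) (Fin t) ℝ) :
    Crit' R' Y ↔
      ∀ (E : Matrix (Fin o) (Fin o) ℝ) (P : Matrix (Fin t) (Fin t) ℝ),
        ((Y - R') * (E * Y + Y * P)ᵀ).trace = 0 :=
  forall_tangent_iff Y _

lemma crit_fromCols_iff_forall {o t m : ℕ} (R' W' : Matrix (Fin o) (Fin t) ℝ)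
    (W'' : Matrix (Fin o) (Fin m) ℝ) :
    Crit R' (fromCols W' W'') ↔
      ∀ (E : Matrix (Fin o) (Fin o) ℝ) (P : Matrix (Fin t) (Fin t) ℝ)
        (Q : Matrix (Fin m) (Fin t) ℝ), ((W' - R') * (E * W' + W' * P + W'' * Q)ᵀ).trace = 0 := by
  simp only [Crit, forall_tangent_iff, trace_fromCols_sub_mul_fromBlocks_mul_transpose]
  simp only [toCols₁_mul_fromCols_add_fromCols_mul]
  refine ⟨fun h E P Q => ?_, fun h E P => h _ _ _⟩
  simpa only [toCols₁_fromCols, toRows₁_fromRows, toRows₂_fromRows] using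
    h E (fromCols (fromRows P Q) 0)

/-- The criticality criterion (critical_condition) in the proof of Theorem 4.2:
`W = (W' | W'')` is critical iff `W'` is critical for the Frobenius distance to `R'`
and `cspan(W'') ⟂ cspan(W' − R')`. -/
theorem crit_iff_crit'_and_orth (o t m : ℕ) (R' : Matrix (Fin o) (Fin t) ℝ)
    (W' : Matrix (Fin o) (Fin t) ℝ) (W'' : Matrix (Fin o) (Fin m) ℝ) :
    Crit R' (Matrix.fromCols W' W'') ↔
      (Crit' R' W' ∧
        ∀ x ∈ colSpace W'', ∀ y ∈ colSpace (W' - R'), x ⬝ᵥ y = 0) := by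
  rw [crit_fromCols_iff_forall, crit'_iff_forall, ← forall_trace_mul_transpose_mul_eq_zero_iff]
  simp only [transpose_add, Matrix.mul_add, trace_add]
  refine ⟨fun h => ⟨fun E P => by simpa using h E P 0, fun Q => by simpa using h 0 0 Q⟩, ?_⟩
  rintro ⟨hT, hQ⟩ E P Q
  rw [hT, hQ, add_zero]
end

section
/- Work in the ℝ-module F := Fin 2 → MvPolynomial (Fin 2 × Fin 2) ℝ. Let 𝕄 be the 2×2 matrix over MvPolynomial (Fin 2 × Fin 2) ℝ whose (i, j) entry is the variable X (i, j). For V : Fin 2 → ℝ and A a real 2×2 matrix, let f(V, A) ∈ F be the row vector Matrix.vecMul (fun i => C (V i)) (𝕄 * 𝕄ᵀ * (A.map C) * 𝕄), where C : ℝ → MvPolynomial (Fin 2 × Fin 2) ℝ is the constant embedding. Then the ℝ-submodule of F spanned by the set { f(V, A) | V : Fin 2 → ℝ, A : Matrix (Fin 2) (Fin 2) ℝ } has finite rank equal to 6. -/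
open Matrix MvPolynomial

/-- The generic `2×2` matrix whose entries are the variables `X (i, j)`. -/
noncomputable def genMat : Matrix (Fin 2) (Fin 2) (MvPolynomial (Fin 2 × Fin 2) ℝ) :=
  Matrix.of fun i j => X (i, j)

/-- The polynomial function computed by the lightning self-attention mechanism with
parameters `V` and `A` (architecture `e' = 1`, `e = t = a = 2`), viewed as a pair of
cubic polynomials in the four entries of the input matrix. -/
noncomputable def attentionFun (V : Fin 2 → ℝ) (A : Matrix (Fin 2) (Fin 2) ℝ) :
    Fin 2 → MvPolynomial (Fin 2 × Fin 2) ℝ :=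
  Matrix.vecMul (fun i => C (V i)) (genMat * genMatᵀ * (A.map C) * genMat)

/-!
Write `f(V, A) = Vᵀ G A M` with `G = M Mᵀ`. Since `f` is bilinear in `(V, A)`, its image spans
the same space as the values `f(eᵢ, Eₖₗ) = Gᵢₖ • (row l of M)`. As `G` is symmetric, only six of
these are distinct: `q • (row l of M)` with `q ∈ {G₀₀, G₀₁, G₁₁}` and `l ∈ {0, 1}`. They are
linearly independent because the substitution `X₀₀ ↦ 1, X₀₁ ↦ t, X₁₀ ↦ t², X₁₁ ↦ t⁴` sends their
first coordinates to polynomials of the distinct degrees `2, 4, 5, 7, 8, 10`.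
-/

theorem Polynomial.linearIndependent_of_degree_eq {R ι : Type*} [Ring R] [IsDomain R]
    {p : ι → Polynomial R} (d : ι → ℕ) (hd : Function.Injective d) (hp : ∀ i, (p i).degree = d i) :
    LinearIndependent R p := by
  have hp0 (i : ι) : p i ≠ 0 := fun h => by simpa [h] using hp i
  have degree_smul {a : R} (ha : a ≠ 0) (i : ι) : (a • p i).degree = (p i).degree :=
    degree_smul_of_isRightRegular_leadingCoeff ha
      (IsRegular.of_ne_zero (leadingCoeff_ne_zero.mpr (hp0 i))).right
  refine linearIndependent_iff'.mpr fun s g hsum i hi => ?_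
  have hdisjoint : Set.Pairwise {i | i ∈ s ∧ g i • p i ≠ 0}
      (Function.onFun Ne fun i => (g i • p i).degree) := by
    rintro x ⟨-, hx⟩ y ⟨-, hy⟩ hxy
    rw [Function.onFun, degree_smul (left_ne_zero_of_smul hx),
      degree_smul (left_ne_zero_of_smul hy)]
    simpa [hp] using hd.ne hxy
  have hsup := degree_sum_eq_of_disjoint _ s hdisjoint
  rw [hsum, degree_zero, eq_comm, Finset.sup_eq_bot_iff] at hsup
  by_contra hgi
  exact hp0 i (by simpa [degree_smul hgi] using hsup i hi)

def entryMulRow {S n : Type*} [Mul S] (G M : Matrix n n S) (t : n × n × n) : n → S :=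
  G t.1 t.2.1 • M t.2.2

section BilinearSpan

variable {R S n : Type*} [CommRing R] [CommRing S] [Algebra R S] [Fintype n]

theorem vecMul_mul_map_mul_eq_sum (G M : Matrix n n S) (V : n → R) (A : Matrix n n R) :
    vecMul (fun i => algebraMap R S (V i)) (G * A.map (algebraMap R S) * M) =
      ∑ i, ∑ k, ∑ l, (V i * A k l) • entryMulRow G M (i, k, l) := by
  ext j
  simp only [Finset.sum_apply, Pi.smul_apply, entryMulRow, smul_eq_mul]
  simp only [vecMul, dotProduct, Matrix.mul_apply, Algebra.smul_def, Finset.mul_sum,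
    Finset.sum_mul, map_mul, Matrix.map_apply]
  refine Finset.sum_congr rfl fun i _ => ?_
  rw [Finset.sum_comm]
  refine Finset.sum_congr rfl fun k _ => Finset.sum_congr rfl fun l _ => ?_
  ring

theorem span_vecMul_mul_map_mul [DecidableEq n] (G M : Matrix n n S) :
    Submodule.span R {g | ∃ (V : n → R) (A : Matrix n n R),
        g = vecMul (fun i => algebraMap R S (V i)) (G * A.map (algebraMap R S) * M)} =
      Submodule.span R (Set.range (entryMulRow G M)) := by
  apply le_antisymm <;> rw [Submodule.span_le]
  · rintro _ ⟨V, A, rfl⟩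
    rw [vecMul_mul_map_mul_eq_sum]
    exact Submodule.sum_mem _ fun i _ => Submodule.sum_mem _ fun k _ =>
      Submodule.sum_mem _ fun l _ => Submodule.smul_mem _ _ (Submodule.subset_span ⟨_, rfl⟩)
  · rintro _ ⟨⟨i, k, l⟩, rfl⟩
    refine Submodule.subset_span ⟨Pi.single i 1, Matrix.single k l 1, ?_⟩
    rw [vecMul_mul_map_mul_eq_sum]
    simp [Pi.single_apply, Matrix.single_apply, ite_smul, ite_and, Finset.sum_ite_eq']

end BilinearSpan

def upperTriples : Fin 6 → Fin 2 × Fin 2 × Fin 2 :=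
  ![(0, 0, 0), (0, 0, 1), (0, 1, 0), (0, 1, 1), (1, 1, 0), (1, 1, 1)]

theorem range_entryMulRow_eq_of_isSymm {S : Type*} [Mul S] {G : Matrix (Fin 2) (Fin 2) S}
    (hG : G.IsSymm) (M : Matrix (Fin 2) (Fin 2) S) :
    Set.range (entryMulRow G M) = Set.range (entryMulRow G M ∘ upperTriples) := by
  refine (Set.range_comp_subset_range _ _).antisymm' ?_
  rintro _ ⟨⟨i, k, l⟩, rfl⟩
  have hG10 : G 1 0 = G 0 1 := hG.apply 0 1
  fin_cases i <;> fin_cases k <;> fin_cases l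
  exacts [⟨0, rfl⟩, ⟨1, rfl⟩, ⟨2, rfl⟩, ⟨3, rfl⟩, ⟨2, by simp [upperTriples, entryMulRow, hG10]⟩,
    ⟨3, by simp [upperTriples, entryMulRow, hG10]⟩, ⟨4, rfl⟩, ⟨5, rfl⟩]

noncomputable def curveSubst : MvPolynomial (Fin 2 × Fin 2) ℝ →ₐ[ℝ] Polynomial ℝ :=
  aeval fun p => ![![1, Polynomial.X], ![Polynomial.X ^ 2, Polynomial.X ^ 4]] p.1 p.2

theorem degree_curveSubst_entryMulRow (m : Fin 6) :
    (curveSubst (entryMulRow (genMat * genMatᵀ) genMat (upperTriples m) 0)).degree =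
      ((![2, 4, 5, 7, 8, 10] : Fin 6 → ℕ) m : WithBot ℕ) := by
  fin_cases m <;>
  · simp [curveSubst, upperTriples, entryMulRow, genMat, Matrix.mul_apply, Fin.sum_univ_two,
      -Polynomial.degree_mul, -Polynomial.degree_pow, -Polynomial.degree_mul_X_pow]
    compute_degree!

theorem linearIndependent_entryMulRow_gram :
    LinearIndependent ℝ (entryMulRow (genMat * genMatᵀ) genMat ∘ upperTriples) :=
  LinearIndependent.of_comp (curveSubst.toLinearMap ∘ₗ LinearMap.proj 0)
    (Polynomial.linearIndependent_of_degree_eq _ (by decide) degree_curveSubst_entryMulRow)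

/-- The linear span of the neuromanifold of the lightning self-attention mechanism with
`e' = 1` and `e = t = a = 2` is six-dimensional (Section 5.2 of the paper). -/
theorem attention_span_rank_six :
    Module.rank ℝ (Submodule.span ℝ
      { g : Fin 2 → MvPolynomial (Fin 2 × Fin 2) ℝ |
        ∃ (V : Fin 2 → ℝ) (A : Matrix (Fin 2) (Fin 2) ℝ), g = attentionFun V A }) = 6 := by
  have hspan : Submodule.span ℝ {g | ∃ V A, g = attentionFun V A} =
      Submodule.span ℝ (Set.range (entryMulRow (genMat * genMatᵀ) genMat ∘ upperTriples)) := by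
    rw [← range_entryMulRow_eq_of_isSymm (isSymm_mul_transpose_self genMat),
      ← span_vecMul_mul_map_mul]
    simp only [attentionFun, MvPolynomial.algebraMap_eq]
  rw [hspan, rank_span linearIndependent_entryMulRow_gram,
    Cardinal.mk_range_eq _ linearIndependent_entryMulRow_gram.injective,
    Cardinal.mk_fin, Nat.cast_ofNat]
end

section
/- For real numbers c₁, c₂, c₃, c₄, c₅, c₆, the following are equivalent: (1) there exist real numbers a, b, p, q, r, s such that c₁ = a*p, c₂ = a*q + b*p, c₃ = b*q, c₄ = a*r, c₅ = a*s + b*r, and c₆ = b*s; (2) c₁²c₆² + c₄²c₃² + c₁c₃c₅² + c₂²c₄c₆ − 2c₁c₃c₄c₆ − c₁c₂c₅c₆ − c₂c₃c₄c₅ = 0, and c₂² − 4c₁c₃ ≥ 0, and c₅² − 4c₄c₆ ≥ 0. -/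
/-!
A common linear factor `vx - uy` of the two forms is the same thing as a common zero `(u, v) ≠ 0`,
and a form `c₁x² + c₂xy + c₃y²` with `c₂² - 4c₁c₃ ≥ 0` has a real zero. The values
`(u², uv, v²)` at a common zero are orthogonal to both coefficient vectors, hence proportional to
their cross product `(C, -B, A)`, where `A = c₁c₅ - c₂c₄`, `B = c₁c₆ - c₃c₄`, `C = c₂c₆ - c₃c₅`
are the `2 × 2` minors of the coefficient matrix. Conversely, when that cross product is
nonzero, the vanishing of the resultant `B² - AC` makes `(C, -B)` or `(-B, A)` a common zero.
When it is zero the forms are proportional and a zero of the nonzero one is common.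
-/

section CommRing

variable {K : Type*} [CommRing K]

def quadForm (c₁ c₂ c₃ u v : K) : K := c₁ * u ^ 2 + c₂ * u * v + c₃ * v ^ 2

def HasCommonLinearFactor (c₁ c₂ c₃ c₄ c₅ c₆ : K) : Prop :=
  ∃ a b p q r s : K,
    c₁ = a * p ∧ c₂ = a * q + b * p ∧ c₃ = b * q ∧
    c₄ = a * r ∧ c₅ = a * s + b * r ∧ c₆ = b * s

def quadResultant (c₁ c₂ c₃ c₄ c₅ c₆ : K) : K :=
  (c₁ * c₆ - c₃ * c₄) ^ 2 - (c₁ * c₅ - c₂ * c₄) * (c₂ * c₆ - c₃ * c₅)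

theorem quadResultant_eq (c₁ c₂ c₃ c₄ c₅ c₆ : K) :
    quadResultant c₁ c₂ c₃ c₄ c₅ c₆ =
      c₁ ^ 2 * c₆ ^ 2 + c₄ ^ 2 * c₃ ^ 2 + c₁ * c₃ * c₅ ^ 2 + c₂ ^ 2 * c₄ * c₆
        - 2 * c₁ * c₃ * c₄ * c₆ - c₁ * c₂ * c₅ * c₆ - c₂ * c₃ * c₄ * c₅ := by
  unfold quadResultant; ring

theorem quadResultant_linear_mul (a b p q r s : K) :
    quadResultant (a * p) (a * q + b * p) (b * q) (a * r) (a * s + b * r) (b * s) = 0 := by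
  unfold quadResultant; ring

theorem discrim_linear_mul (a b p q : K) :
    discrim (a * p) (a * q + b * p) (b * q) = (a * q - b * p) ^ 2 := by
  unfold discrim; ring

theorem quadForm_at_minors_CB (c₁ c₂ c₃ c₄ c₅ c₆ : K) :
    quadForm c₁ c₂ c₃ (c₂ * c₆ - c₃ * c₅) (-(c₁ * c₆ - c₃ * c₄)) =
        c₃ * quadResultant c₁ c₂ c₃ c₄ c₅ c₆ ∧
      quadForm c₄ c₅ c₆ (c₂ * c₆ - c₃ * c₅) (-(c₁ * c₆ - c₃ * c₄)) =
        c₆ * quadResultant c₁ c₂ c₃ c₄ c₅ c₆ := by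
  unfold quadForm quadResultant; constructor <;> ring

theorem quadForm_at_minors_BA (c₁ c₂ c₃ c₄ c₅ c₆ : K) :
    quadForm c₁ c₂ c₃ (-(c₁ * c₆ - c₃ * c₄)) (c₁ * c₅ - c₂ * c₄) =
        c₁ * quadResultant c₁ c₂ c₃ c₄ c₅ c₆ ∧
      quadForm c₄ c₅ c₆ (-(c₁ * c₆ - c₃ * c₄)) (c₁ * c₅ - c₂ * c₄) =
        c₄ * quadResultant c₁ c₂ c₃ c₄ c₅ c₆ := by
  unfold quadForm quadResultant; constructor <;> ring

theorem exists_common_zero_of_minor_ne_zero {c₁ c₂ c₃ c₄ c₅ c₆ : K}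
    (hR : quadResultant c₁ c₂ c₃ c₄ c₅ c₆ = 0)
    (hminor : c₁ * c₅ - c₂ * c₄ ≠ 0 ∨ c₁ * c₆ - c₃ * c₄ ≠ 0 ∨ c₂ * c₆ - c₃ * c₅ ≠ 0) :
    ∃ u v : K, (u ≠ 0 ∨ v ≠ 0) ∧ quadForm c₁ c₂ c₃ u v = 0 ∧ quadForm c₄ c₅ c₆ u v = 0 := by
  rcases hminor with hA | hBC
  · obtain ⟨hF, hG⟩ := quadForm_at_minors_BA c₁ c₂ c₃ c₄ c₅ c₆
    exact ⟨_, _, Or.inr hA, by rw [hF, hR, mul_zero], by rw [hG, hR, mul_zero]⟩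
  · obtain ⟨hF, hG⟩ := quadForm_at_minors_CB c₁ c₂ c₃ c₄ c₅ c₆
    refine ⟨_, _, ?_, by rw [hF, hR, mul_zero], by rw [hG, hR, mul_zero]⟩
    exact hBC.symm.imp_right neg_ne_zero.mpr

end CommRing

section Field

variable {K : Type*} [Field K]

theorem quadForm_eq_zero_of_minors_eq_zero {c₁ c₂ c₃ c₄ c₅ c₆ u v : K}
    (hA : c₁ * c₅ - c₂ * c₄ = 0) (hB : c₁ * c₆ - c₃ * c₄ = 0) (hC : c₂ * c₆ - c₃ * c₅ = 0)
    (hc : c₁ ≠ 0 ∨ c₂ ≠ 0 ∨ c₃ ≠ 0) (hF : quadForm c₁ c₂ c₃ u v = 0) :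
    quadForm c₄ c₅ c₆ u v = 0 := by
  unfold quadForm at *
  rcases hc with hc | hc | hc <;> refine mul_left_cancel₀ hc ?_
  · linear_combination c₄ * hF + u * v * hA + v ^ 2 * hB
  · linear_combination c₅ * hF - u ^ 2 * hA + v ^ 2 * hC
  · linear_combination c₆ * hF - u ^ 2 * hB - u * v * hC

theorem exists_linear_factor_of_quadForm_eq_zero {c₁ c₂ c₃ u v : K} (huv : u ≠ 0 ∨ v ≠ 0)
    (hF : quadForm c₁ c₂ c₃ u v = 0) :
    ∃ p q : K, c₁ = v * p ∧ c₂ = v * q + -u * p ∧ c₃ = -u * q := by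
  unfold quadForm at hF
  rcases eq_or_ne v 0 with rfl | hv
  · have hu : u ≠ 0 := huv.resolve_right (not_not.mpr rfl)
    have hc₁ : c₁ = 0 := by simpa [hu] using hF
    exact ⟨-c₂ / u, -c₃ / u, by simp [hc₁], by field_simp; ring, by field_simp⟩
  · refine ⟨c₁ / v, (c₂ * v + u * c₁) / v ^ 2, by field_simp, by field_simp; ring, ?_⟩
    field_simp
    linear_combination hF

theorem hasCommonLinearFactor_of_common_zero {c₁ c₂ c₃ c₄ c₅ c₆ u v : K} (huv : u ≠ 0 ∨ v ≠ 0)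
    (hF : quadForm c₁ c₂ c₃ u v = 0) (hG : quadForm c₄ c₅ c₆ u v = 0) :
    HasCommonLinearFactor c₁ c₂ c₃ c₄ c₅ c₆ := by
  obtain ⟨p, q, h₁, h₂, h₃⟩ := exists_linear_factor_of_quadForm_eq_zero huv hF
  obtain ⟨r, s, h₄, h₅, h₆⟩ := exists_linear_factor_of_quadForm_eq_zero huv hG
  exact ⟨v, -u, p, q, r, s, h₁, h₂, h₃, h₄, h₅, h₆⟩

end Field

theorem exists_quadForm_eq_zero_of_discrim_nonneg {c₁ c₂ c₃ : ℝ} (h : 0 ≤ discrim c₁ c₂ c₃) :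
    ∃ u v : ℝ, (u ≠ 0 ∨ v ≠ 0) ∧ quadForm c₁ c₂ c₃ u v = 0 := by
  rcases eq_or_ne c₁ 0 with hc₁ | hc₁
  · exact ⟨1, 0, Or.inl one_ne_zero, by simp [quadForm, hc₁]⟩
  · obtain ⟨x, hx⟩ :=
      exists_quadratic_eq_zero hc₁ ⟨√(discrim c₁ c₂ c₃), (Real.mul_self_sqrt h).symm⟩
    exact ⟨x, 1, Or.inr one_ne_zero, by rw [← hx]; unfold quadForm; ring⟩

theorem exists_common_zero_of_minors_eq_zero {c₁ c₂ c₃ c₄ c₅ c₆ : ℝ}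
    (hA : c₁ * c₅ - c₂ * c₄ = 0) (hB : c₁ * c₆ - c₃ * c₄ = 0) (hC : c₂ * c₆ - c₃ * c₅ = 0)
    (h₁ : 0 ≤ discrim c₁ c₂ c₃) (h₂ : 0 ≤ discrim c₄ c₅ c₆) :
    ∃ u v : ℝ, (u ≠ 0 ∨ v ≠ 0) ∧ quadForm c₁ c₂ c₃ u v = 0 ∧ quadForm c₄ c₅ c₆ u v = 0 := by
  by_cases hc : c₁ = 0 ∧ c₂ = 0 ∧ c₃ = 0
  · obtain ⟨u, v, huv, hG⟩ := exists_quadForm_eq_zero_of_discrim_nonneg h₂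
    obtain ⟨rfl, rfl, rfl⟩ := hc
    exact ⟨u, v, huv, by simp [quadForm], hG⟩
  · obtain ⟨u, v, huv, hF⟩ := exists_quadForm_eq_zero_of_discrim_nonneg h₁
    have hc' : c₁ ≠ 0 ∨ c₂ ≠ 0 ∨ c₃ ≠ 0 := by tauto
    exact ⟨u, v, huv, hF, quadForm_eq_zero_of_minors_eq_zero hA hB hC hc' hF⟩

theorem exists_common_zero_of_quadResultant_eq_zero {c₁ c₂ c₃ c₄ c₅ c₆ : ℝ}
    (hR : quadResultant c₁ c₂ c₃ c₄ c₅ c₆ = 0)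
    (h₁ : 0 ≤ discrim c₁ c₂ c₃) (h₂ : 0 ≤ discrim c₄ c₅ c₆) :
    ∃ u v : ℝ, (u ≠ 0 ∨ v ≠ 0) ∧ quadForm c₁ c₂ c₃ u v = 0 ∧ quadForm c₄ c₅ c₆ u v = 0 := by
  by_cases hminor : c₁ * c₅ - c₂ * c₄ ≠ 0 ∨ c₁ * c₆ - c₃ * c₄ ≠ 0 ∨ c₂ * c₆ - c₃ * c₅ ≠ 0
  · exact exists_common_zero_of_minor_ne_zero hR hminor
  · simp only [not_or, not_not] at hminor
    obtain ⟨hA, hB, hC⟩ := hminor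
    exact exists_common_zero_of_minors_eq_zero hA hB hC h₁ h₂

/-- Semialgebraic description of the neuromanifold of the lightning self-attention
mechanism (`e' = 1`, `e = t = a = 2`): the binary quadratic forms
`c₁x² + c₂xy + c₃y²` and `c₄x² + c₅xy + c₆y²` have a common real linear factor iff
their resultant vanishes and both discriminants are nonnegative. -/
theorem attention_semialgebraic (c₁ c₂ c₃ c₄ c₅ c₆ : ℝ) :
    (∃ a b p q r s : ℝ,
        c₁ = a * p ∧ c₂ = a * q + b * p ∧ c₃ = b * q ∧
        c₄ = a * r ∧ c₅ = a * s + b * r ∧ c₆ = b * s) ↔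
    (c₁ ^ 2 * c₆ ^ 2 + c₄ ^ 2 * c₃ ^ 2 + c₁ * c₃ * c₅ ^ 2 + c₂ ^ 2 * c₄ * c₆
        - 2 * c₁ * c₃ * c₄ * c₆ - c₁ * c₂ * c₅ * c₆ - c₂ * c₃ * c₄ * c₅ = 0 ∧
      c₂ ^ 2 - 4 * c₁ * c₃ ≥ 0 ∧ c₅ ^ 2 - 4 * c₄ * c₆ ≥ 0) := by
  rw [← quadResultant_eq]
  change HasCommonLinearFactor c₁ c₂ c₃ c₄ c₅ c₆ ↔
    _ ∧ 0 ≤ discrim c₁ c₂ c₃ ∧ 0 ≤ discrim c₄ c₅ c₆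
  constructor
  · rintro ⟨a, b, p, q, r, s, rfl, rfl, rfl, rfl, rfl, rfl⟩
    refine ⟨quadResultant_linear_mul a b p q r s, ?_, ?_⟩ <;> rw [discrim_linear_mul] <;> positivity
  · rintro ⟨hR, h₁, h₂⟩
    obtain ⟨u, v, huv, hF, hG⟩ := exists_common_zero_of_quadResultant_eq_zero hR h₁ h₂
    exact hasCommonLinearFactor_of_common_zero huv hF hG
end
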